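/- arXiv:1611.00246 — 3 statements merged into one kernel-verified Lean document; each statement's English description precedes it below -/
import Mathlib

section
/- Let D be a (2,2) digraph. If the underlying graph U(D) of D contains a hole H of length at least 7, then the subgraph of the phylogeny graph P(D) induced by the vertex set of H is not chordal. -/
/-- The underlying graph of a digraph given by arc relation `A`. -/
def underlyingGraph {V : Type*} (A : V → V → Prop) : SimpleGraph V where
  Adj x y := x ≠ y ∧ (A x y ∨ A y x)
  symm := by
    constructor
    intro x y ⟨h, h'⟩
    exact ⟨h.symm, h'.symm⟩
  loopless := by
    constructor
    intro x ⟨h, _⟩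
    exact h rfl

/-- The competition graph of a digraph given by arc relation `A`. -/
def competitionGraph {V : Type*} (A : V → V → Prop) : SimpleGraph V where
  Adj x y := x ≠ y ∧ ∃ w, A x w ∧ A y w
  symm := by
    constructor
    intro x y ⟨h, w, h1, h2⟩
    exact ⟨h.symm, w, h2, h1⟩
  loopless := by
    constructor
    intro x ⟨h, _⟩
    exact h rfl

/-- The phylogeny graph of a digraph given by arc relation `A`. -/
def phylogenyGraph {V : Type*} (A : V → V → Prop) : SimpleGraph V :=
  underlyingGraph A ⊔ competitionGraph A

/-- A `(i,j)` digraph: a (finite, simple) acyclic digraph in which every vertex has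
indegree at most `i` and outdegree at most `j`. -/
def IsIJDigraph {V : Type*} (i j : ℕ) (A : V → V → Prop) : Prop :=
  (∀ v : V, ¬ Relation.TransGen A v v) ∧
  (∀ v : V, {u | A u v}.ncard ≤ i) ∧
  (∀ v : V, {u | A v u}.ncard ≤ j)

/-- An edge of the phylogeny graph is a *cared edge* if it belongs to the competition
graph but not to the underlying graph. -/
def CaredEdge {V : Type*} (A : V → V → Prop) (x y : V) : Prop :=
  (competitionGraph A).Adj x y ∧ ¬ (underlyingGraph A).Adj x y

/-- A cycle in a graph is a *hole* if it has length at least `4` and is induced. -/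
def IsHole {V : Type*} (G : SimpleGraph V) {v : V} (c : G.Walk v v) : Prop :=
  c.IsCycle ∧ 4 ≤ c.length ∧
    ∀ x ∈ c.support, ∀ y ∈ c.support, G.Adj x y → s(x, y) ∈ c.edges

/-- A graph is *chordal* if every cycle of length at least `4` has a chord, i.e.
the graph has no hole. -/
def IsChordal {V : Type*} (G : SimpleGraph V) : Prop :=
  ∀ (v : V) (c : G.Walk v v), c.IsCycle → 4 ≤ c.length →
    ∃ x ∈ c.support, ∃ y ∈ c.support, G.Adj x y ∧ s(x, y) ∉ c.edges

/-!
Label the hole `w : ℤ → V` periodically, with period its length `n`. If the subgraph of `P(D)`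
induced by the hole were chordal, every edge `w a w b` between hole vertices with
`a + 2 ≤ b < a + n` would have an apex `w k`, `a < k < b`, adjacent to both `w a` and `w b`.
Following apexes inwards from the hole edge `w 0 w (n - 1)` produces a chord `w i w (i + 2)`;
read the other way round the hole, it is a chord spanning `n - 2 ≥ 5` steps.

Chords of a hole are competition edges, and since indegrees are at most `2`, distinct chords at a
vertex `x` use distinct prey of `x`. As outdegrees are at most `2`, a vertex has at most two
chords, and if `x → y` is an arc and `x` has two chords, one of them shares the prey `y` with `x`.
Inside a chord spanning at least five steps, the first fact forces the apexes into a zigzag that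
ends at a hole edge both of whose ends have two chords not reaching the other end; whichever way
that edge is directed contradicts the second fact.
-/

open SimpleGraph

section

variable {V : Type*}

namespace SimpleGraph.Walk

variable {G : SimpleGraph V} {u : ℕ → V} {m : ℕ}

def ofSeq (u : ℕ → V) : (m : ℕ) → (∀ i < m, G.Adj (u i) (u (i + 1))) → G.Walk (u 0) (u m)
  | 0, _ => .nil
  | m + 1, h => (ofSeq u m fun i hi => h i (by omega)).concat (h m (by omega))

theorem length_ofSeq (h : ∀ i < m, G.Adj (u i) (u (i + 1))) : (ofSeq u m h).length = m := by
  induction m with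
  | zero => rfl
  | succ m ih => simp [ofSeq, ih]

theorem support_ofSeq (h : ∀ i < m, G.Adj (u i) (u (i + 1))) :
    (ofSeq u m h).support = (List.range (m + 1)).map u := by
  induction m with
  | zero => rfl
  | succ m ih => simp [ofSeq, support_concat, ih, List.range_succ (n := m + 1)]

theorem getVert_ofSeq (h : ∀ i < m, G.Adj (u i) (u (i + 1))) {k : ℕ} (hk : k ≤ m) :
    (ofSeq u m h).getVert k = u k := by
  simp [getVert_eq_support_getElem _ ((length_ofSeq h).symm ▸ hk), support_ofSeq]

theorem mk_mem_edges_ofSeq (h : ∀ i < m, G.Adj (u i) (u (i + 1))) {i : ℕ} (hi : i < m) :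
    s(u i, u (i + 1)) ∈ (ofSeq u m h).edges := by
  refine (mk_mem_edges_iff_exists _).2 ⟨i, by rwa [length_ofSeq], ?_⟩
  rw [getVert_ofSeq h hi.le, getVert_ofSeq h hi]

variable {v : V} {c : G.Walk v v}

theorem getVert_toNat_emod_natCast {t : ℕ} (ht : t ≤ c.length) :
    c.getVert ((t : ℤ) % c.length).toNat = c.getVert t := by
  rcases ht.lt_or_eq with ht | rfl
  · rw [Int.emod_eq_of_lt (by omega) (by omega), Int.toNat_natCast]
  · simp [getVert_length]

theorem IsCycle.getVert_toNat_emod_eq_iff (hc : c.IsCycle) {i j : ℤ} :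
    c.getVert (i % c.length).toNat = c.getVert (j % c.length).toNat ↔
      i ≡ j [ZMOD c.length] := by
  have hL : (0 : ℤ) < c.length := by have := hc.three_le_length; omega
  have hi := Int.emod_nonneg i hL.ne'
  have hj := Int.emod_nonneg j hL.ne'
  have hi' := Int.emod_lt_of_pos i hL
  have hj' := Int.emod_lt_of_pos j hL
  refine ⟨fun h => ?_, fun h => by rw [h.eq]⟩
  have := hc.getVert_injOn' (by simp only [Set.mem_ofPred_eq]; omega)
    (by simp only [Set.mem_ofPred_eq]; omega) h
  exact (show i % c.length = j % c.length by omega)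

end SimpleGraph.Walk

theorem Int.eq_of_dvd_sub_of_lt {a b n : ℤ} (h : n ∣ b - a) (hab : a ≤ b) (hba : b < a + n) :
    a = b := by
  have := Int.eq_zero_of_dvd_of_nonneg_of_lt (by omega) (by omega) h
  omega

section Chordal

variable {G : SimpleGraph V} {u : ℕ → V} {m : ℕ}

theorem IsChordal.exists_adj_of_seq (hG : IsChordal G) (hm : 3 ≤ m)
    (hinj : ∀ i ≤ m, ∀ j ≤ m, u i = u j → i = j) (hadj : ∀ i < m, G.Adj (u i) (u (i + 1)))
    (hclose : G.Adj (u m) (u 0)) :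
    ∃ i j, i + 2 ≤ j ∧ j ≤ m ∧ (0 < i ∨ j < m) ∧ G.Adj (u i) (u j) := by
  set c := Walk.cons hclose (Walk.ofSeq u m hadj)
  have hcyc : c.IsCycle := by
    rw [Walk.cons_isCycle_iff, Walk.isPath_def, Walk.support_ofSeq]
    refine ⟨List.Nodup.map_on (fun i hi j hj => hinj i (by simp at hi; omega) j
      (by simp at hj; omega)) List.nodup_range, fun h => ?_⟩
    obtain ⟨t, ht, he⟩ := (Walk.mk_mem_edges_iff_exists _).1 h
    rw [Walk.length_ofSeq] at ht
    rw [Walk.getVert_ofSeq hadj ht.le, Walk.getVert_ofSeq hadj ht, Sym2.eq_iff] at he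
    rcases he with ⟨he, -⟩ | ⟨he, he'⟩
    · exact absurd (hinj t ht.le m le_rfl he) ht.ne
    · have := hinj t ht.le 0 (Nat.zero_le m) he
      have := hinj (t + 1) ht m le_rfl he'
      omega
  have hmem : ∀ x ∈ c.support, ∃ i ≤ m, u i = x := by
    intro x hx
    simp only [c, Walk.support_cons, Walk.support_ofSeq, List.mem_cons, List.mem_map,
      List.mem_range] at hx
    rcases hx with rfl | ⟨i, hi, rfl⟩
    exacts [⟨m, le_rfl, rfl⟩, ⟨i, by omega, rfl⟩]
  have hchord : ∀ i j, i < j → j ≤ m → G.Adj (u i) (u j) → s(u i, u j) ∉ c.edges →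
      ∃ i j, i + 2 ≤ j ∧ j ≤ m ∧ (0 < i ∨ j < m) ∧ G.Adj (u i) (u j) := by
    intro i j hij hj hadjij hnot
    refine ⟨i, j, ?_, hj, ?_, hadjij⟩
    · by_contra hij'
      obtain rfl : j = i + 1 := by omega
      exact hnot (List.mem_cons_of_mem _ (Walk.mk_mem_edges_ofSeq hadj (by omega)))
    · by_contra hij'
      obtain ⟨rfl, rfl⟩ : i = 0 ∧ j = m := by omega
      exact hnot (by simp [c, Sym2.eq_swap])
  obtain ⟨x, hx, y, hy, hxy, hnot⟩ := hG _ c hcyc (by simp [c, Walk.length_ofSeq]; omega)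
  obtain ⟨i, hi, rfl⟩ := hmem x hx
  obtain ⟨j, hj, rfl⟩ := hmem y hy
  rcases lt_trichotomy i j with hij | rfl | hij
  · exact hchord i j hij hj hxy hnot
  · exact absurd hxy G.irrefl
  · exact hchord j i hij hi hxy.symm (by rwa [Sym2.eq_swap])

theorem IsChordal.exists_apex_of_seq (hG : IsChordal G) (hm : 2 ≤ m)
    (hinj : ∀ i ≤ m, ∀ j ≤ m, u i = u j → i = j) (hadj : ∀ i < m, G.Adj (u i) (u (i + 1)))
    (hclose : G.Adj (u m) (u 0)) :
    ∃ k, 0 < k ∧ k < m ∧ G.Adj (u 0) (u k) ∧ G.Adj (u k) (u m) := by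
  induction m using Nat.strong_induction_on generalizing u with
  | _ m ih =>
  rcases (by omega : m = 2 ∨ 3 ≤ m) with rfl | hm
  · exact ⟨1, by omega, by omega, hadj 0 (by omega), hadj 1 (by omega)⟩
  obtain ⟨i, j, hij, hj, hij', hchord⟩ := hG.exists_adj_of_seq hm hinj hadj hclose
  -- `u ∘ e` is the shorter cycle that takes the chord `u i u j` instead of the `d` vertices
  -- strictly between `u i` and `u j`
  set d := j - i - 1
  set e : ℕ → ℕ := fun k => if k ≤ i then k else k + d with he
  have he_le : ∀ k ≤ m - d, e k ≤ m := fun k hk => by simp only [he]; split_ifs <;> omega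
  have he_inj : ∀ a b, e a = e b → a = b := fun a b h => by
    simp only [he] at h; split_ifs at h <;> omega
  have he_zero : e 0 = 0 := if_pos (Nat.zero_le i)
  have he_last : e (m - d) = m := by simp only [he]; rw [if_neg (by omega)]; omega
  obtain ⟨k, hk, hkm, h₁, h₂⟩ := ih (m - d) (by omega) (u := u ∘ e) (by omega)
    (fun a ha b hb h => he_inj a b (hinj _ (he_le a ha) _ (he_le b hb) h))
    (fun k hk => by
      rcases lt_trichotomy k i with hki | rfl | hki
      · simpa [he, hki.le, Nat.succ_le_of_lt hki] using hadj k (by omega)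
      · simpa [he, show k + 1 + d = j by omega] using hchord
      · simpa [he, show ¬k ≤ i by omega, show ¬k < i by omega, add_right_comm k 1 d] using
          hadj (k + d) (by omega))
    (by simpa [he_zero, he_last] using hclose)
  refine ⟨e k, ?_, ?_, by simpa [he_zero] using h₁, by simpa [he_last] using h₂⟩ <;>
    simp only [he] <;> split_ifs <;> omega

end Chordal

section Polygons

variable {G : SimpleGraph V} {n : ℤ} {w : ℤ → V}

def PolygonsHaveApexes (G : SimpleGraph V) (n : ℤ) (w : ℤ → V) : Prop :=
  ∀ ⦃a b : ℤ⦄, a + 2 ≤ b → b < a + n → G.Adj (w a) (w b) →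
    ∃ k, a < k ∧ k < b ∧ G.Adj (w a) (w k) ∧ G.Adj (w k) (w b)

theorem IsChordal.polygonsHaveApexes {s : Set V} (hG : IsChordal (G.induce s))
    (hs : ∀ i, w i ∈ s) (hne : ∀ ⦃i j⦄, i < j → j < i + n → w i ≠ w j)
    (hadj : ∀ i, G.Adj (w i) (w (i + 1))) : PolygonsHaveApexes G n w := by
  intro a b hab hba h
  have hm : a + ((b - a).toNat : ℤ) = b := by omega
  obtain ⟨k, hk, hkm, h₁, h₂⟩ := hG.exists_apex_of_seq (m := (b - a).toNat)
    (u := fun k => ⟨w (a + k), hs _⟩) (by omega)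
    (fun i hi j hj hij => by
      by_contra hne'
      rcases Nat.lt_or_gt_of_ne hne' with hlt | hlt
      · exact hne (i := a + i) (j := a + j) (by omega) (by omega) (congrArg Subtype.val hij)
      · exact hne (i := a + j) (j := a + i) (by omega) (by omega) (congrArg Subtype.val hij).symm)
    (fun i _ => by simpa [add_assoc] using hadj (a + i))
    (by show G.Adj (w (a + _)) (w (a + ((0 : ℕ) : ℤ))); rw [hm]; simpa using h.symm)
  refine ⟨a + k, by omega, by omega, by simpa using h₁, ?_⟩
  rw [← hm]
  exact h₂

theorem PolygonsHaveApexes.neg (h : PolygonsHaveApexes G n w) :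
    PolygonsHaveApexes G n (fun i => w (-i)) := by
  intro a b hab hba hadj
  obtain ⟨k, hk₁, hk₂, h₁, h₂⟩ := h (a := -b) (b := -a) (by omega) (by omega)
    (by simpa using hadj.symm)
  exact ⟨-k, by omega, by omega, by simpa using h₂.symm, by simpa using h₁.symm⟩

theorem PolygonsHaveApexes.exists_adj_add_two (h : PolygonsHaveApexes G n w)
    (hadj : ∀ i, G.Adj (w i) (w (i + 1))) (hper : Function.Periodic w n) (hn : 3 ≤ n) :
    ∃ i, G.Adj (w i) (w (i + 2)) := by
  suffices key : ∀ d : ℕ, ∀ a b : ℤ, b - a = d → a + 2 ≤ b → b < a + n → G.Adj (w a) (w b) →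
      ∃ i, G.Adj (w i) (w (i + 2)) by
    refine key (n - 1).toNat 0 (n - 1) (by omega) (by omega) (by omega) ?_
    rw [show w 0 = w n by simpa using (hper 0).symm]
    simpa using (hadj (n - 1)).symm
  intro d
  induction d using Nat.strong_induction_on with
  | _ d ih =>
  intro a b hd hab hba hadj'
  rcases (by omega : b = a + 2 ∨ a + 3 ≤ b) with rfl | hab
  · exact ⟨a, hadj'⟩
  obtain ⟨k, hk₁, hk₂, h₁, h₂⟩ := h (by omega) hba hadj'
  rcases (by omega : k = a + 1 ∨ a + 2 ≤ k) with rfl | hk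
  · exact ih (b - (a + 1)).toNat (by omega) (a + 1) b (by omega) (by omega) (by omega) h₂
  · exact ih (k - a).toNat (by omega) a k (by omega) hk (by omega) h₁

end Polygons

section HoleLabelling

variable {G : SimpleGraph V} {n : ℤ} {w : ℤ → V}

/-- Indexing by `ℤ` keeps spans as integer differences, and makes the reflection `i ↦ -i`
available, so that mirror-image cases are argued once. -/
structure IsHoleLabelling (G : SimpleGraph V) (n : ℤ) (w : ℤ → V) : Prop where
  ne : ∀ ⦃i j⦄, i < j → j < i + n → w i ≠ w j
  adj_succ : ∀ i, G.Adj (w i) (w (i + 1))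
  eq_of_adj : ∀ ⦃i j⦄, i < j → j < i + n → G.Adj (w i) (w j) → j = i + 1 ∨ j = i + n - 1
  periodic : Function.Periodic w n

theorem IsHoleLabelling.neg (h : IsHoleLabelling G n w) :
    IsHoleLabelling G n (fun i => w (-i)) where
  ne i j hij hji := (h.ne (i := -j) (j := -i) (by omega) (by omega)).symm
  adj_succ i := by
    rw [neg_add']
    simpa using (h.adj_succ (-i - 1)).symm
  eq_of_adj i j hij hji hadj := by
    have := h.eq_of_adj (i := -j) (j := -i) (by omega) (by omega) hadj.symm
    omega
  periodic i := by
    show w (-(i + n)) = w (-i)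
    rw [neg_add', ← h.periodic (-i - n), sub_add_cancel]

theorem IsHoleLabelling.not_adj (h : IsHoleLabelling G n w) {p q : ℤ} (hpq : p + 2 ≤ q)
    (hqp : q + 2 ≤ p + n) : ¬G.Adj (w p) (w q) := fun hadj => by
  have := h.eq_of_adj (by omega) (by omega) hadj
  omega

theorem IsHole.isHoleLabelling {v : V} {c : G.Walk v v} (hc : IsHole G c) :
    IsHoleLabelling G c.length (fun i => c.getVert (i % c.length).toNat) := by
  have hL : (0 : ℤ) < c.length := by have := hc.1.three_le_length; omega
  have heq := fun {i j : ℤ} => hc.1.getVert_toNat_emod_eq_iff (i := i) (j := j)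
  have hlt : ∀ i : ℤ, (i % c.length).toNat < c.length := fun i => by
    have := Int.emod_lt_of_pos i hL; have := Int.emod_nonneg i hL.ne'; omega
  have hcast : ∀ i : ℤ, (((i % c.length).toNat : ℕ) : ℤ) ≡ i [ZMOD c.length] := fun i => by
    rw [Int.toNat_of_nonneg (Int.emod_nonneg i hL.ne')]; exact Int.mod_modEq i _
  refine ⟨fun i j hij hji h => ?_, fun i => ?_, fun i j hij hji hadj => ?_, fun i => ?_⟩
  · have := Int.eq_of_dvd_sub_of_lt (heq.1 h).dvd hij.le hji
    omega
  · have := c.adj_getVert_succ (hlt i)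
    rw [← Walk.getVert_toNat_emod_natCast (t := _ + 1) (hlt i)] at this
    convert this using 1
    exact heq.2 (by push_cast; exact ((hcast i).add_right 1).symm)
  · have hmem : ∀ k : ℤ, c.getVert (k % c.length).toNat ∈ c.support :=
      fun k => c.getVert_mem_support _
    obtain ⟨t, ht, he⟩ := (Walk.mk_mem_edges_iff_exists c).1 (hc.2.2 _ (hmem i) _ (hmem j) hadj)
    rw [← Walk.getVert_toNat_emod_natCast ht.le,
      ← Walk.getVert_toNat_emod_natCast (t := t + 1) ht, Sym2.eq_iff] at he
    rcases he with ⟨h₁, h₂⟩ | ⟨h₁, h₂⟩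
    · have hdvd : (c.length : ℤ) ∣ j - (i + 1) := by
        rw [show j - (i + 1) = j - ↑(t + 1) - (i - t) by push_cast; ring]
        exact dvd_sub (heq.1 h₂).dvd (heq.1 h₁).dvd
      have := Int.eq_of_dvd_sub_of_lt hdvd (by omega) (by omega)
      omega
    · have hdvd : (c.length : ℤ) ∣ i + c.length - 1 - j := by
        rw [show i + c.length - 1 - j = i - ↑(t + 1) - (j - t) + c.length by push_cast; ring]
        exact dvd_add (dvd_sub (heq.1 h₂).dvd (heq.1 h₁).dvd) dvd_rfl
      have := Int.eq_of_dvd_sub_of_lt hdvd (by omega) (by omega)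
      omega
  · exact heq.2 Int.add_modEq_right

end HoleLabelling
section Digraph

variable {A : V → V → Prop}

structure InOutDegreeLeTwo (A : V → V → Prop) : Prop where
  indeg : ∀ v, {u | A u v}.ncard ≤ 2
  outdeg : ∀ v, {u | A v u}.ncard ≤ 2

variable [Finite V]

theorem InOutDegreeLeTwo.prey_ne (hdeg : InOutDegreeLeTwo A) {x y₁ y₂ p₁ p₂ : V} (hx₁ : x ≠ y₁)
    (hx₂ : x ≠ y₂) (hy : y₁ ≠ y₂) (h₁ : A x p₁) (h₁' : A y₁ p₁) (h₂ : A x p₂) (h₂' : A y₂ p₂) :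
    p₁ ≠ p₂ := by
  rintro rfl
  exact (hdeg.indeg p₁).not_gt
    ((Set.two_lt_ncard_iff (Set.toFinite _)).2 ⟨x, y₁, y₂, h₁, h₁', h₂', hx₁, hx₂, hy⟩)

theorem InOutDegreeLeTwo.false_of_three_competitors (hdeg : InOutDegreeLeTwo A) {x y₁ y₂ y₃ : V}
    (h₁ : (competitionGraph A).Adj x y₁) (h₂ : (competitionGraph A).Adj x y₂)
    (h₃ : (competitionGraph A).Adj x y₃) (h₁₂ : y₁ ≠ y₂) (h₁₃ : y₁ ≠ y₃) (h₂₃ : y₂ ≠ y₃) :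
    False := by
  obtain ⟨hx₁, p₁, hp₁, hp₁'⟩ := h₁
  obtain ⟨hx₂, p₂, hp₂, hp₂'⟩ := h₂
  obtain ⟨hx₃, p₃, hp₃, hp₃'⟩ := h₃
  exact (hdeg.outdeg x).not_gt ((Set.two_lt_ncard_iff (Set.toFinite _)).2
    ⟨p₁, p₂, p₃, hp₁, hp₂, hp₃, hdeg.prey_ne hx₁ hx₂ h₁₂ hp₁ hp₁' hp₂ hp₂',
      hdeg.prey_ne hx₁ hx₃ h₁₃ hp₁ hp₁' hp₃ hp₃', hdeg.prey_ne hx₂ hx₃ h₂₃ hp₂ hp₂' hp₃ hp₃'⟩)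

theorem InOutDegreeLeTwo.arc_or_arc_of_competitors (hdeg : InOutDegreeLeTwo A) {x y z₁ z₂ : V}
    (hxy : A x y) (h₁ : (competitionGraph A).Adj x z₁) (h₂ : (competitionGraph A).Adj x z₂)
    (hz : z₁ ≠ z₂) : A z₁ y ∨ A z₂ y := by
  obtain ⟨hx₁, p₁, hp₁, hp₁'⟩ := h₁
  obtain ⟨hx₂, p₂, hp₂, hp₂'⟩ := h₂
  by_contra! h
  exact (hdeg.outdeg x).not_gt ((Set.two_lt_ncard_iff (Set.toFinite _)).2
    ⟨p₁, p₂, y, hp₁, hp₂, hxy, hdeg.prey_ne hx₁ hx₂ hz hp₁ hp₁' hp₂ hp₂',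
      fun e => h.1 (e ▸ hp₁'), fun e => h.2 (e ▸ hp₂')⟩)

end Digraph
section HoleInDigraph

variable {A : V → V → Prop} {n : ℤ} {w : ℤ → V}

theorem IsHoleLabelling.competitionGraph_adj (hw : IsHoleLabelling (underlyingGraph A) n w)
    {p q : ℤ} (h : (phylogenyGraph A).Adj (w p) (w q)) (hpq : p + 2 ≤ q := by omega)
    (hqp : q + 2 ≤ p + n := by omega) : (competitionGraph A).Adj (w p) (w q) :=
  ((SimpleGraph.sup_adj _ _ _ _).1 h).resolve_left (hw.not_adj hpq hqp)

theorem IsHoleLabelling.not_arc (hw : IsHoleLabelling (underlyingGraph A) n w) {p q : ℤ}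
    (hpq : p + 2 ≤ q := by omega) (hqp : q + 2 ≤ p + n := by omega) : ¬A (w p) (w q) :=
  fun h => hw.not_adj hpq hqp ⟨hw.ne (by omega) (by omega), Or.inl h⟩

variable [Finite V]

theorem false_of_adj_of_adj_add_one (hdeg : InOutDegreeLeTwo A)
    (hw : IsHoleLabelling (underlyingGraph A) n w)
    (hapex : PolygonsHaveApexes (phylogenyGraph A) n w) {a b : ℤ} (hab : a + 5 ≤ b)
    (hba : b + 2 ≤ a + n) (h₀ : (phylogenyGraph A).Adj (w a) (w b))
    (h₁ : (phylogenyGraph A).Adj (w (a + 1)) (w b)) : False := by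
  -- `w b` already competes with `w a` and `w (a + 1)`, so the apex over `(a + 1, b)` is `b - 1`
  obtain ⟨k, hk₁, hk₂, h₂, h₃⟩ := hapex (a := a + 1) (by omega) (by omega) h₁
  obtain rfl : k = b - 1 := by
    by_contra hk
    exact hdeg.false_of_three_competitors (hw.competitionGraph_adj h₀).symm
      (hw.competitionGraph_adj h₁).symm (hw.competitionGraph_adj h₃).symm
      (hw.ne (by omega) (by omega)) (hw.ne (by omega) (by omega)) (hw.ne (by omega) (by omega))
  -- then `w (a + 1)` competes with `w b` and `w (b - 1)`, so the apex over `(a + 1, b - 1)`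
  -- is `a + 2`
  obtain ⟨k, hk₁, hk₂, h₄, h₅⟩ := hapex (a := a + 1) (b := b - 1) (by omega) (by omega) h₂
  obtain rfl : k = a + 2 := by
    by_contra hk
    exact hdeg.false_of_three_competitors (hw.competitionGraph_adj h₁)
      (hw.competitionGraph_adj h₂) (hw.competitionGraph_adj h₄)
      (hw.ne (by omega) (by omega)).symm (hw.ne (by omega) (by omega)).symm
      (hw.ne (by omega) (by omega)).symm
  -- each end of the hole edge `w (b - 1) w b` now competes with two vertices far from the other
  have hedge := hw.adj_succ (b - 1)
  rw [sub_add_cancel] at hedge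
  rcases hedge.2 with h | h
  · exact (hdeg.arc_or_arc_of_competitors h (hw.competitionGraph_adj h₂).symm
      (hw.competitionGraph_adj h₅).symm (hw.ne (by omega) (by omega))).elim
      hw.not_arc hw.not_arc
  · exact (hdeg.arc_or_arc_of_competitors h (hw.competitionGraph_adj h₀).symm
      (hw.competitionGraph_adj h₁).symm (hw.ne (by omega) (by omega))).elim
      hw.not_arc hw.not_arc

theorem false_of_adj_of_apex (hdeg : InOutDegreeLeTwo A)
    (hw : IsHoleLabelling (underlyingGraph A) n w)
    (hapex : PolygonsHaveApexes (phylogenyGraph A) n w) {a b k : ℤ} (hak : a + 3 ≤ k)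
    (hkb : k + 2 ≤ b) (hba : b + 2 ≤ a + n) (h₀ : (phylogenyGraph A).Adj (w a) (w b))
    (h₁ : (phylogenyGraph A).Adj (w a) (w k)) (h₂ : (phylogenyGraph A).Adj (w k) (w b)) :
    False := by
  -- `w a` already competes with `w b` and `w k`, so the apex over `(a, k)` is `a + 1`, which
  -- is then a third competitor of `w k`
  obtain ⟨j, hj₁, hj₂, h₃, h₄⟩ := hapex (by omega) (by omega) h₁
  rcases (by omega : j = a + 1 ∨ a + 2 ≤ j) with rfl | hj
  · exact hdeg.false_of_three_competitors (hw.competitionGraph_adj h₁).symm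
      (hw.competitionGraph_adj h₂) (hw.competitionGraph_adj h₄).symm
      (hw.ne (by omega) (by omega)) (hw.ne (by omega) (by omega))
      (hw.ne (by omega) (by omega)).symm
  · exact hdeg.false_of_three_competitors (hw.competitionGraph_adj h₀)
      (hw.competitionGraph_adj h₁) (hw.competitionGraph_adj h₃)
      (hw.ne (by omega) (by omega)).symm (hw.ne (by omega) (by omega)).symm
      (hw.ne (by omega) (by omega)).symm

theorem false_of_adj_of_five_le (hdeg : InOutDegreeLeTwo A)
    (hw : IsHoleLabelling (underlyingGraph A) n w)
    (hapex : PolygonsHaveApexes (phylogenyGraph A) n w) {a b : ℤ} (hab : a + 5 ≤ b)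
    (hba : b + 2 ≤ a + n) (h : (phylogenyGraph A).Adj (w a) (w b)) : False := by
  obtain ⟨k, hk₁, hk₂, h₁, h₂⟩ := hapex (by omega) (by omega) h
  rcases (by omega : k = a + 1 ∨ k = b - 1 ∨ a + 3 ≤ k ∧ k + 2 ≤ b ∨ k + 3 ≤ b ∧ a + 2 ≤ k)
    with rfl | rfl | ⟨hk, hk'⟩ | ⟨hk, hk'⟩
  · exact false_of_adj_of_adj_add_one hdeg hw hapex hab hba h h₂
  · exact false_of_adj_of_adj_add_one hdeg hw.neg hapex.neg (a := -b) (b := -a) (by omega)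
      (by omega) (by simpa using h.symm) (by simpa [neg_add_eq_sub] using h₁.symm)
  · exact false_of_adj_of_apex hdeg hw hapex hk hk' hba h h₁ h₂
  · exact false_of_adj_of_apex hdeg hw.neg hapex.neg (a := -b) (b := -a) (k := -k) (by omega)
      (by omega) (by omega) (by simpa using h.symm) (by simpa using h₂.symm)
      (by simpa using h₁.symm)

end HoleInDigraph

end

/-- Let `D` be a `(2,2)` digraph. If the underlying graph of `D` contains a hole `H`
of length at least `7`, then the subgraph of the phylogeny graph of `D` induced by
the vertex set of `H` is not chordal. -/
theorem stmt_9 {V : Type*} [Fintype V] (A : V → V → Prop)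
    (hD : IsIJDigraph 2 2 A)
    (v : V) (c : (underlyingGraph A).Walk v v)
    (hH : IsHole (underlyingGraph A) c) (hlen : 7 ≤ c.length) :
    ¬ IsChordal ((phylogenyGraph A).induce {x | x ∈ c.support}) := by
  intro hchordal
  have hw := hH.isHoleLabelling
  have hadj : ∀ i, (phylogenyGraph A).Adj _ _ := fun i => Or.inl (hw.adj_succ i)
  have hapex := hchordal.polygonsHaveApexes (fun i => c.getVert_mem_support _) hw.ne hadj
  obtain ⟨i, hi⟩ := hapex.exists_adj_add_two hadj hw.periodic (by omega)
  refine false_of_adj_of_five_le ⟨hD.2.1, hD.2.2⟩ hw hapex (a := i + 2) (b := i + c.length)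
    (by omega) (by omega) ?_
  convert hi.symm using 1
  exact hw.periodic i
end

section
/- Let D be a (2,2) digraph whose phylogeny graph P(D) contains a hole H, and let W be a set extending H. Then no two vertices of W are adjacent in the underlying graph U(D) of D. -/
/-- Given a hole `c` in the phylogeny graph of a digraph with arc relation `A`,
a set `W` *extends* `c` if every element of `W` takes care of some cared edge of `c`
and every cared edge of `c` is taken care of by some element of `W`. -/
def ExtendingSet {V : Type*} (A : V → V → Prop) {v : V}
    (c : (phylogenyGraph A).Walk v v) (W : Set V) : Prop :=
  (∀ w ∈ W, ∃ x y : V, s(x, y) ∈ c.edges ∧ CaredEdge A x y ∧ A x w ∧ A y w) ∧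
  (∀ x y : V, s(x, y) ∈ c.edges → CaredEdge A x y → ∃ w ∈ W, A x w ∧ A y w)

/-!
Suppose `w₁ → w₂` with `w₁, w₂ ∈ W`. The vertex `w₂` takes care of an edge `xy` of the hole,
so `x, y, w₁` are in-neighbours of `w₂`; as the indegree is at most two, `w₁ ∈ {x, y}` lies
on the hole. But `w₁` takes care of an edge `pq` of the hole, so the arcs `p → w₁`, `q → w₁`
join vertices of the hole in `P(D)` and are therefore edges of the hole, holes being induced.
Then `p, q, w₁` is a triangle of edges of the hole, which forces the hole to have length 3.
-/

theorem Set.eq_or_eq_of_ncard_le_two {α : Type*} {S : Set α} (hS : S.ncard ≤ 2)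
    (hfin : S.Finite) {x y z : α} (hx : x ∈ S) (hy : y ∈ S) (hz : z ∈ S) (hxy : x ≠ y) :
    z = x ∨ z = y := by
  by_contra! h
  exact hS.not_gt
    ((Set.two_lt_ncard_iff hfin).mpr ⟨x, y, z, hx, hy, hz, hxy, h.1.symm, h.2.symm⟩)

namespace SimpleGraph.Walk

variable {V : Type*} {G : SimpleGraph V}

theorem mem_of_mem_support_of_edges_closed {u v a : V} (p : G.Walk u v) {T : Set V}
    (hT : ∀ x ∈ T, ∀ y, s(x, y) ∈ p.edges → y ∈ T) (ha : a ∈ p.support) (haT : a ∈ T) :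
    ∀ z ∈ p.support, z ∈ T := by
  induction p generalizing a with
  | nil => simp_all
  | @cons u v w h q ih =>
    have hT' : ∀ x ∈ T, ∀ y, s(x, y) ∈ q.edges → y ∈ T := fun x hx y hy =>
      hT x hx y (by simp [hy])
    have huv : u ∈ T ↔ v ∈ T :=
      ⟨fun hu => hT u hu v (by simp), fun hv => hT v hv u (by simp [Sym2.eq_swap])⟩
    have hq : ∀ z ∈ q.support, z ∈ T := by
      rcases List.mem_cons.mp (support_cons h q ▸ ha) with rfl | ha
      · exact ih hT' q.start_mem_support (huv.mp haT)
      · exact ih hT' ha haT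
    intro z hz
    rcases List.mem_cons.mp (support_cons h q ▸ hz) with rfl | hz
    · exact huv.mpr (hq _ q.start_mem_support)
    · exact hq z hz

theorem IsCycle.eq_or_eq_of_mem_edges {u x y z w : V} {c : G.Walk u u} (hc : c.IsCycle)
    (hy : s(x, y) ∈ c.edges) (hz : s(x, z) ∈ c.edges) (hyz : y ≠ z)
    (hw : s(x, w) ∈ c.edges) : w = y ∨ w = z := by
  have hadj {t : V} (ht : s(x, t) ∈ c.edges) : c.toSubgraph.Adj x t :=
    Subgraph.mem_edgeSet.mp (c.mem_edges_toSubgraph.mpr ht)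
  have hsub : {y, z} ⊆ c.toSubgraph.neighborSet x := by
    rintro t (rfl | rfl)
    exacts [hadj hy, hadj hz]
  have hN : c.toSubgraph.neighborSet x = {y, z} :=
    (Set.eq_of_subset_of_ncard_le hsub (by
      rw [hc.ncard_neighborSet_toSubgraph_eq_two (c.fst_mem_support_of_mem_edges hy),
        Set.ncard_pair hyz]) (finite_neighborSet_toSubgraph c)).symm
  have hwN : w ∈ c.toSubgraph.neighborSet x := hadj hw
  simpa [hN] using hwN

theorem IsCycle.length_eq_three_of_triangle {u a b d : V} {c : G.Walk u u} (hc : c.IsCycle)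
    (hab : a ≠ b) (had : a ≠ d) (hbd : b ≠ d) (h₁ : s(a, b) ∈ c.edges)
    (h₂ : s(a, d) ∈ c.edges) (h₃ : s(b, d) ∈ c.edges) : c.length = 3 := by
  classical
  set T : Set V := {a, b, d}
  -- the triangle is closed under the edges of `c`, hence contains the whole cycle
  have hclosed : ∀ x ∈ T, ∀ y, s(x, y) ∈ c.edges → y ∈ T := by
    rintro x (rfl | rfl | rfl) y hy
    · rcases hc.eq_or_eq_of_mem_edges h₁ h₂ hbd hy with rfl | rfl <;> simp [T]
    · rcases hc.eq_or_eq_of_mem_edges (Sym2.eq_swap ▸ h₁) h₃ had hy with rfl | rfl <;> simp [T]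
    · rcases hc.eq_or_eq_of_mem_edges (Sym2.eq_swap ▸ h₂) (Sym2.eq_swap ▸ h₃) hab hy
        with rfl | rfl <;> simp [T]
  have hsupp := c.mem_of_mem_support_of_edges_closed hclosed
    (c.fst_mem_support_of_mem_edges h₁) (by simp [T])
  have hle : c.support.tail.toFinset ⊆ {a, b, d} := fun z hz => by
    simpa [T] using hsupp z (List.mem_of_mem_tail (List.mem_toFinset.mp hz))
  have hcard := Finset.card_le_card hle
  rw [List.toFinset_card_of_nodup hc.support_nodup, List.length_tail, length_support] at hcard
  have := Finset.card_le_three (a := a) (b := b) (c := d)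
  have := hc.three_le_length
  omega

end SimpleGraph.Walk

section Phylogeny

variable {V : Type*} {A : V → V → Prop}

theorem phylogenyGraph_adj_of_arc {x y : V} (hxy : x ≠ y) (h : A x y) :
    (phylogenyGraph A).Adj x y :=
  Or.inl ⟨hxy, Or.inl h⟩

theorem IsHole.notMem_support_of_arcs (hirr : ∀ x, ¬ A x x) {u : V}
    {c : (phylogenyGraph A).Walk u u} (hH : IsHole (phylogenyGraph A) c) {p q w : V}
    (hpq : s(p, q) ∈ c.edges) (hp : A p w) (hq : A q w) : w ∉ c.support := by
  intro hw
  have hpw : p ≠ w := fun h => hirr p (h ▸ hp)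
  have hqw : q ≠ w := fun h => hirr q (h ▸ hq)
  have hpw_mem := hH.2.2 p (c.fst_mem_support_of_mem_edges hpq) w hw
    (phylogenyGraph_adj_of_arc hpw hp)
  have hqw_mem := hH.2.2 q (c.snd_mem_support_of_mem_edges hpq) w hw
    (phylogenyGraph_adj_of_arc hqw hq)
  have hlen₃ := hH.1.length_eq_three_of_triangle (c.adj_of_mem_edges hpq).ne hpw hqw hpq
    hpw_mem hqw_mem
  have hlen₄ := hH.2.1
  omega

theorem not_arc_of_mem_extendingSet [Finite V] (hD : IsIJDigraph 2 2 A) {u : V}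
    {c : (phylogenyGraph A).Walk u u} (hH : IsHole (phylogenyGraph A) c) {W : Set V}
    (hW : ExtendingSet A c W) {w₁ w₂ : V} (hw₁ : w₁ ∈ W) (hw₂ : w₂ ∈ W) : ¬ A w₁ w₂ := by
  intro h
  obtain ⟨x, y, hxy, -, hx, hy⟩ := hW.1 w₂ hw₂
  obtain ⟨p, q, hpq, -, hp, hq⟩ := hW.1 w₁ hw₁
  have hirr : ∀ x, ¬ A x x := fun x hxx => hD.1 x (.single hxx)
  refine hH.notMem_support_of_arcs hirr hpq hp hq ?_
  rcases Set.eq_or_eq_of_ncard_le_two (hD.2.1 w₂) (Set.toFinite _) hx hy h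
    (c.adj_of_mem_edges hxy).ne with rfl | rfl
  exacts [c.fst_mem_support_of_mem_edges hxy, c.snd_mem_support_of_mem_edges hxy]

end Phylogeny

/-- Let `D` be a `(2,2)` digraph whose phylogeny graph contains a hole `H`, and let
`W` be a set extending `H`. Then no two vertices of `W` are adjacent in the underlying
graph of `D`. -/
theorem stmt_12 {V : Type*} [Fintype V] (A : V → V → Prop)
    (hD : IsIJDigraph 2 2 A)
    (u : V) (c : (phylogenyGraph A).Walk u u) (hH : IsHole (phylogenyGraph A) c)
    (W : Set V) (hW : ExtendingSet A c W) :
    ∀ w₁ ∈ W, ∀ w₂ ∈ W, ¬ (underlyingGraph A).Adj w₁ w₂ := by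
  rintro w₁ hw₁ w₂ hw₂ ⟨-, h | h⟩
  exacts [not_arc_of_mem_extendingSet hD hH hW hw₁ hw₂ h,
    not_arc_of_mem_extendingSet hD hH hW hw₂ hw₁ h]
end

section
/- Let D be a (2,2) digraph and let H be a hole of the phylogeny graph P(D) of D. Then there exists a hole in the underlying graph U(D) of D such that: if H is itself a hole in U(D), this hole equals H; otherwise, this hole contains only vertices of V(H) ∪ W, where W is a set extending H. -/
/-!
Replacing every cared edge `xy` of `H` by the path `x → w ← y` through a vertex `w` taking care of
it gives a cycle of length at least `5` in `U(D)` on `V(H) ∪ W`: a caretaker has exactly the ends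
of its cared edge as in-neighbours and cannot lie on the hole, since `x`, `y`, `w` would form a
triangle of `H`.

A shortest cycle of length at least `5` on a vertex set `S` is a hole unless a chord cuts it into
two paths of length `2` or `3`; then one of them closes up to a square through the chord and the
other one contributes a common neighbour of the chord's ends. Such a square is a hole or a diamond
(a square with a chord), so everything comes down to showing that no vertex of `V(H) ∪ W` off a
diamond on `V(H) ∪ W` is adjacent to both ends of a side of it at an end of the chord. This is where
the degree bounds and acyclicity of `D` enter: in such a diamond exactly one end of the chord is
a caretaker, and the arcs around it are then forced.
-/

open SimpleGraph

theorem Set.eq_or_eq_of_ncard_le_two_s14 {α : Type*} {s : Set α} (hs : s.Finite) (h : s.ncard ≤ 2)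
    {a b t : α} (ha : a ∈ s) (hb : b ∈ s) (hab : a ≠ b) (ht : t ∈ s) : t = a ∨ t = b := by
  by_contra! hne
  have := (Set.two_lt_ncard_iff hs).2 ⟨a, b, t, ha, hb, ht, hab, hne.1.symm, hne.2.symm⟩
  omega

namespace SimpleGraph

variable {V : Type*} {G : SimpleGraph V}

namespace Walk

variable {u v x y : V}

theorem IsCycle.eq_or_eq_of_mem_edges_s14 {c : G.Walk u u} (hc : c.IsCycle) {a b t : V}
    (ha : s(v, a) ∈ c.edges) (hb : s(v, b) ∈ c.edges) (hab : a ≠ b) (ht : s(v, t) ∈ c.edges) :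
    t = a ∨ t = b := by
  have h2 := hc.ncard_neighborSet_toSubgraph_eq_two (c.fst_mem_support_of_mem_edges ha)
  refine Set.eq_or_eq_of_ncard_le_two_s14 (Set.finite_of_ncard_ne_zero (by omega)) h2.le ?_ ?_ hab
    ?_ <;> simpa [Subgraph.mem_neighborSet, adj_toSubgraph_iff_mem_edges]

theorem IsCycle.length_eq_three_of_triangle_s14 {c : G.Walk u u} (hc : c.IsCycle) {p q r : V}
    (hpq : s(p, q) ∈ c.edges) (hqr : s(q, r) ∈ c.edges) (hpr : s(p, r) ∈ c.edges) :
    c.length = 3 := by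
  classical
  have hp : p ∈ c.support := c.fst_mem_support_of_mem_edges hpq
  set C := c.rotate p hp
  have hC : C.IsCycle := hc.rotate hp
  have hE : ∀ e, e ∈ C.edges ↔ e ∈ c.edges := fun e => (c.rotate_edges p hp).perm.mem_iff
  have hnbr : ∀ {a b : V}, s(a, b) ∈ c.edges → C.toSubgraph.Adj a b := fun h =>
    adj_toSubgraph_iff_mem_edges.2 ((hE _).2 h)
  have h3 := hC.three_le_length
  have hp' : ∀ t, C.toSubgraph.Adj p t → t = C.snd ∨ t = C.penultimate := fun t ht => by
    have : t ∈ C.toSubgraph.neighborSet p := ht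
    rwa [hC.neighborSet_toSubgraph_endpoint] at this
  have hs' : ∀ t, C.toSubgraph.Adj C.snd t → t = p ∨ t = C.getVert 2 := fun t ht => by
    have : t ∈ C.toSubgraph.neighborSet (C.getVert 1) := ht
    rwa [hC.neighborSet_toSubgraph_internal (by omega) (by omega), getVert_zero] at this
  have hpen : C.penultimate ≠ p := by
    rw [penultimate, Ne, hC.getVert_endpoint_iff (by omega)]; omega
  have key : ∀ {q r : V}, s(p, q) ∈ c.edges → s(q, r) ∈ c.edges → s(p, r) ∈ c.edges →
      q = C.snd → c.length = 3 := by
    intro q r hpq hqr hpr hq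
    subst hq
    -- `r` is a neighbour of both `p` and `C.snd` on `C`, so it is `C.penultimate` and
    -- `C.getVert 2` at once
    have hrq : r ≠ C.snd := (c.adj_of_mem_edges hqr).ne'
    have hr : r = C.penultimate := (hp' r (hnbr hpr)).resolve_left hrq
    have hr2 : r = C.getVert 2 := (hs' r (hnbr hqr)).resolve_left (hr ▸ hpen)
    have := hC.getVert_injOn (by simp; omega) (by simp; omega) (hr2.symm.trans hr)
    simp only [C, length_rotate] at this ⊢
    omega
  rcases hp' q (hnbr hpq) with hq | hq
  · exact key hpq hqr hpr hq
  · have hqr' : q ≠ r := (c.adj_of_mem_edges hqr).ne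
    have hr := (hp' r (hnbr hpr)).resolve_right (fun h => hqr' (hq.trans h.symm))
    exact key hpr (Sym2.eq_swap ▸ hqr) hpq hr

theorem two_le_length_of_notMem_edges (p : G.Walk x y) (hxy : x ≠ y) (h : s(x, y) ∉ p.edges) :
    2 ≤ p.length := by
  cases p with
  | nil => exact absurd rfl hxy
  | cons _ p => cases p with
    | nil => simp at h
    | cons _ p => simp

theorem IsPath.isCycle_cons {p : G.Walk x y} (hp : p.IsPath) (h : G.Adj y x) (h2 : 2 ≤ p.length) :
    (cons h p).IsCycle := by
  refine (cons_isCycle_iff p h).2 ⟨hp, fun he => ?_⟩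
  have := hp.length_eq_one_of_mem_edges (Sym2.eq_swap ▸ he)
  omega

theorem IsCycle.exists_isPath_isPath {c : G.Walk u u} (hc : c.IsCycle) (hx : x ∈ c.support)
    (hy : y ∈ c.support) (hxy : x ≠ y) :
    ∃ p q : G.Walk x y, p.IsPath ∧ q.IsPath ∧ p.length + q.length = c.length ∧
      (∀ v ∈ p.support, v ∈ q.support → v = x ∨ v = y) ∧
      (∀ e, e ∈ c.edges ↔ e ∈ p.edges ∨ e ∈ q.edges) ∧
      (∀ v, v ∈ c.support ↔ v ∈ p.support ∨ v ∈ q.support) := by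
  classical
  set C := c.rotate x hx
  have hC : C.IsCycle := hc.rotate hx
  have hyC : y ∈ C.support := (c.mem_support_rotate_iff x hx).2 hy
  set p := C.takeUntil y hyC
  set r := C.dropUntil y hyC
  have hspec : p.append r = c.rotate x hx := C.take_spec hyC
  have hp : p.IsPath := hC.isPath_takeUntil hyC
  have hr : r.IsPath := (hspec.symm ▸ hC : (p.append r).IsCycle).isPath_of_append_right
    (not_nil_of_ne hxy)
  refine ⟨p, r.reverse, hp, hr.reverse, ?_, ?_, fun e => ?_, fun v => ?_⟩
  · rw [length_reverse, ← length_append, hspec, length_rotate]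
  · intro v hvp hvq
    by_contra! hv
    have hnd : (p.support.tail ++ r.support.tail).Nodup := by
      rw [← tail_support_append, hspec]; exact hC.support_nodup
    have hvp' : v ∈ p.support.tail := by
      rw [← cons_tail_support] at hvp; exact (List.mem_cons.1 hvp).resolve_left hv.1
    have hvr' : v ∈ r.support.tail := by
      rw [support_reverse, List.mem_reverse, ← cons_tail_support] at hvq
      exact (List.mem_cons.1 hvq).resolve_left hv.2
    exact List.disjoint_of_nodup_append hnd hvp' hvr'
  · rw [← (c.rotate_edges x hx).perm.mem_iff, ← hspec, edges_append, List.mem_append,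
      edges_reverse, List.mem_reverse]
  · rw [← c.mem_support_rotate_iff x hx, ← hspec, mem_support_append_iff, support_reverse,
      List.mem_reverse]

end Walk

def IsDiamond (G : SimpleGraph V) (a b c d : V) : Prop :=
  G.Adj a b ∧ G.Adj b c ∧ G.Adj c d ∧ G.Adj d a ∧ G.Adj a c ∧ b ≠ d

def RimTriangleFree (G : SimpleGraph V) (S : Set V) : Prop :=
  ∀ ⦃a b c d m : V⦄, a ∈ S → b ∈ S → c ∈ S → d ∈ S → m ∈ S → G.IsDiamond a b c d →
    G.Adj m a → G.Adj m b → m ≠ c → m ≠ d → False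

def HasHoleOn (G : SimpleGraph V) (S : Set V) : Prop :=
  ∃ (z : V) (Y : G.Walk z z), IsHole G Y ∧ ∀ v ∈ Y.support, v ∈ S

theorem hasHoleOn_cons {S : Set V} {x y : V} {p : G.Walk x y} (h : G.Adj y x)
    (hp : IsHole G (Walk.cons h p)) (hS : ∀ v ∈ p.support, v ∈ S) : G.HasHoleOn S :=
  ⟨y, _, hp, by simpa using ⟨hS y (by simp), hS⟩⟩

variable {x y : V}

theorem isHole_cons_or_exists_isDiamond {p : G.Walk x y} (hp : p.IsPath) (h3 : p.length = 3)
    (h : G.Adj y x) :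
    IsHole G (Walk.cons h p) ∨
      ∃ c d, c ∈ p.support ∧ d ∈ p.support ∧ (G.IsDiamond x y c d ∨ G.IsDiamond y x c d) := by
  have hc := hp.isCycle_cons h (by omega)
  rcases p with _ | ⟨h₁, _ | ⟨h₂, _ | ⟨h₃, _ | ⟨_, _⟩⟩⟩⟩ <;> simp at h3
  rename_i b₁ b₂
  have hnd := hp.support_nodup
  simp only [Walk.support_cons, Walk.support_nil, List.nodup_cons, List.mem_cons,
    List.not_mem_nil, or_false, not_or, List.nodup_nil] at hnd
  by_cases hxb : G.Adj x b₂
  · exact Or.inr ⟨b₂, b₁, by simp, by simp, Or.inl ⟨h.symm, h₃.symm, h₂.symm, h₁.symm, hxb,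
      fun e => hnd.2.1.2 e.symm⟩⟩
  by_cases hby : G.Adj b₁ y
  · exact Or.inr ⟨b₁, b₂, by simp, by simp, Or.inr ⟨h, h₁, h₂, h₃, hby.symm, hnd.1.2.1⟩⟩
  refine Or.inl ⟨hc, by simp, fun v hv w hw hvw => ?_⟩
  simp only [Walk.support_cons, Walk.support_nil, List.mem_cons, List.not_mem_nil,
    or_false] at hv hw
  simp only [Walk.edges_cons, Walk.edges_nil, List.mem_cons, List.not_mem_nil, or_false,
    Sym2.eq_iff]
  rcases hv with rfl | rfl | rfl | rfl | rfl <;> rcases hw with rfl | rfl | rfl | rfl | rfl <;>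
    first
    | exact absurd rfl hvw.ne
    | exact absurd hvw hxb
    | exact absurd hvw.symm hxb
    | exact absurd hvw hby
    | exact absurd hvw.symm hby
    | simp

theorem isHole_cons_or_exists_adj_adj {q : G.Walk x y} (hq : q.IsPath) (h2 : 2 ≤ q.length)
    (h3 : q.length ≤ 3) (h : G.Adj y x) :
    IsHole G (Walk.cons h q) ∨ ∃ m ∈ q.support, G.Adj m x ∧ G.Adj m y := by
  obtain h2 | h3 : q.length = 2 ∨ q.length = 3 := by omega
  · rcases q with _ | ⟨h₁, _ | ⟨h₂, _ | ⟨_, _⟩⟩⟩ <;> simp at h2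
    exact Or.inr ⟨_, by simp, h₁.symm, h₂⟩
  · refine (isHole_cons_or_exists_isDiamond hq h3 h).imp_right ?_
    rintro ⟨c, d, hc, -, ⟨-, hyc, -, -, hxc, -⟩ | ⟨-, hxc, -, -, hyc, -⟩⟩
    · exact ⟨c, hc, hxc.symm, hyc.symm⟩
    · exact ⟨c, hc, hxc.symm, hyc.symm⟩

/-- A square through the edge `yx` together with a second short path from `x` to `y` gives a hole:
either the square is one, or it is a diamond and the second path supplies a common neighbour of
`x` and `y` off it. -/
theorem RimTriangleFree.hasHoleOn_of_isPath_isPath {S : Set V} (hG : G.RimTriangleFree S)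
    (h : G.Adj y x) {r t : G.Walk x y} (hr : r.IsPath) (ht : t.IsPath) (hr3 : r.length = 3)
    (ht2 : 2 ≤ t.length) (ht3 : t.length ≤ 3)
    (hrt : ∀ v ∈ r.support, v ∈ t.support → v = x ∨ v = y) (hrS : ∀ v ∈ r.support, v ∈ S)
    (htS : ∀ v ∈ t.support, v ∈ S) : G.HasHoleOn S := by
  obtain hhole | ⟨c, d, hc, hd, hdia⟩ := isHole_cons_or_exists_isDiamond hr hr3 h
  · exact hasHoleOn_cons h hhole hrS
  obtain hhole | ⟨m, hm, hmx, hmy⟩ := isHole_cons_or_exists_adj_adj ht ht2 ht3 h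
  · exact hasHoleOn_cons h hhole htS
  have hmr : ∀ v ∈ r.support, m ≠ v := by
    rintro v hv rfl
    rcases hrt m hv hm with rfl | rfl
    exacts [hmx.ne rfl, hmy.ne rfl]
  have hx := hrS x (by simp)
  have hy := hrS y (by simp)
  exfalso
  rcases hdia with hdia | hdia
  · exact hG hx hy (hrS c hc) (hrS d hd) (htS m hm) hdia hmx hmy (hmr c hc) (hmr d hd)
  · exact hG hy hx (hrS c hc) (hrS d hd) (htS m hm) hdia hmy hmx (hmr c hc) (hmr d hd)

theorem RimTriangleFree.hasHoleOn {S : Set V} (hG : G.RimTriangleFree S) {z : V}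
    (Z : G.Walk z z) (hZ : Z.IsCycle) (h5 : 5 ≤ Z.length) (hS : ∀ v ∈ Z.support, v ∈ S) :
    G.HasHoleOn S := by
  induction hn : Z.length using Nat.strong_induction_on generalizing z with
  | _ n ih =>
  by_cases hchord : ∀ x ∈ Z.support, ∀ y ∈ Z.support, G.Adj x y → s(x, y) ∈ Z.edges
  · exact ⟨z, Z, ⟨hZ, by omega, hchord⟩, hS⟩
  push Not at hchord
  obtain ⟨x, hx, y, hy, hxy, hxyZ⟩ := hchord
  obtain ⟨p, q, hp, hq, hlen, hpq, hE, hV⟩ := hZ.exists_isPath_isPath hx hy hxy.ne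
  have hpS : ∀ v ∈ p.support, v ∈ S := fun v hv => hS v ((hV v).2 (Or.inl hv))
  have hqS : ∀ v ∈ q.support, v ∈ S := fun v hv => hS v ((hV v).2 (Or.inr hv))
  have hp2 := p.two_le_length_of_notMem_edges hxy.ne fun h => hxyZ ((hE _).2 (Or.inl h))
  have hq2 := q.two_le_length_of_notMem_edges hxy.ne fun h => hxyZ ((hE _).2 (Or.inr h))
  -- a side of length at least four closes up, with the chord, to a shorter long cycle
  have shorter : ∀ r : G.Walk x y, r.IsPath → 4 ≤ r.length → r.length + 2 ≤ n →
      (∀ v ∈ r.support, v ∈ S) → G.HasHoleOn S :=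
    fun r hr hr4 hrn hrS => ih _ (by simp; omega) (Walk.cons hxy.symm r)
      (hr.isCycle_cons _ (by omega)) (by simp; omega) (by simpa using ⟨hrS y (by simp), hrS⟩) rfl
  by_cases hp4 : 4 ≤ p.length
  · exact shorter p hp hp4 (by omega) hpS
  by_cases hq4 : 4 ≤ q.length
  · exact shorter q hq hq4 (by omega) hqS
  -- otherwise both sides have length `2` or `3`, and one of them has length `3`
  by_cases hp3 : p.length = 3
  · exact hG.hasHoleOn_of_isPath_isPath hxy.symm hp hq hp3 hq2 (by omega) hpq hpS hqS
  · exact hG.hasHoleOn_of_isPath_isPath hxy.symm hq hp (by omega) hp2 (by omega)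
      (fun v hq hp => hpq v hp hq) hqS hpS

end SimpleGraph

section IsHole

variable {V : Type*} {G H : SimpleGraph V} {u : V} {c : G.Walk u u}

theorem IsHole.transfer (hH : IsHole G c) (hle : H ≤ G) (hE : ∀ e ∈ c.edges, e ∈ H.edgeSet) :
    IsHole H (c.transfer H hE) := by
  refine ⟨hH.1.transfer hE, by simpa using hH.2.1, fun x hx y hy hxy => ?_⟩
  rw [Walk.support_transfer] at hx hy
  rw [Walk.edges_transfer]
  exact hH.2.2 x hx y hy (hle hxy)

theorem IsHole.not_adj_of_adj_of_adj (hH : IsHole G c) {p q r : V} (hp : p ∈ c.support)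
    (hq : q ∈ c.support) (hr : r ∈ c.support)
    (hpq : G.Adj p q) (hqr : G.Adj q r) : ¬ G.Adj p r := fun hpr => by
  have := hH.1.length_eq_three_of_triangle_s14 (hH.2.2 p hp q hq hpq) (hH.2.2 q hq r hr hqr)
    (hH.2.2 p hp r hr hpr)
  have := hH.2.1
  omega

end IsHole

namespace IsIJDigraph

variable {V : Type*} {A : V → V → Prop} {i j : ℕ} {x y z : V}

theorem irrefl (hD : IsIJDigraph i j A) (x : V) : ¬ A x x :=
  fun h => hD.1 x (.single h)

theorem ne_of_arc (hD : IsIJDigraph i j A) (h : A x y) : x ≠ y := by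
  rintro rfl
  exact hD.irrefl x h

theorem asymm (hD : IsIJDigraph i j A) (hxy : A x y) : ¬ A y x :=
  fun hyx => hD.1 x ((Relation.TransGen.single hxy).tail hyx)

theorem not_arc_of_arc_of_arc (hD : IsIJDigraph i j A) (hxy : A x y) (hyz : A y z) : ¬ A z x :=
  fun hzx => hD.1 x (((Relation.TransGen.single hxy).tail hyz).tail hzx)

theorem adj_underlyingGraph (hD : IsIJDigraph i j A) (h : A x y) : (underlyingGraph A).Adj x y :=
  ⟨hD.ne_of_arc h, Or.inl h⟩

theorem eq_or_eq_of_arc_to [Finite V] (hD : IsIJDigraph 2 j A) {a b t : V} (ha : A a z)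
    (hb : A b z) (hab : a ≠ b) (ht : A t z) : t = a ∨ t = b :=
  Set.eq_or_eq_of_ncard_le_two_s14 (Set.toFinite _) (hD.2.1 z) ha hb hab ht

theorem eq_or_eq_of_arc_from [Finite V] (hD : IsIJDigraph i 2 A) {a b t : V} (ha : A z a)
    (hb : A z b) (hab : a ≠ b) (ht : A z t) : t = a ∨ t = b :=
  Set.eq_or_eq_of_ncard_le_two_s14 (Set.toFinite _) (hD.2.2 z) ha hb hab ht

theorem sym2_eq_of_arc_to [Finite V] (hD : IsIJDigraph 2 j A) {a b x' y' : V} (ha : A a z)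
    (hb : A b z) (hab : a ≠ b) (hx' : A x' z) (hy' : A y' z) (hxy' : x' ≠ y') :
    s(x', y') = s(a, b) := by
  rcases hD.eq_or_eq_of_arc_to ha hb hab hx' with rfl | rfl <;>
    rcases hD.eq_or_eq_of_arc_to ha hb hab hy' with rfl | rfl
  exacts [(hxy' rfl).elim, rfl, Sym2.eq_swap, (hxy' rfl).elim]

end IsIJDigraph

section Hole

variable {V : Type*} {A : V → V → Prop} {u : V} {c : (phylogenyGraph A).Walk u u}

theorem underlyingGraph_le_phylogenyGraph : underlyingGraph A ≤ phylogenyGraph A := le_sup_left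

theorem caredEdge_of_adj_phylogenyGraph {x y : V} (h : (phylogenyGraph A).Adj x y)
    (hU : ¬ (underlyingGraph A).Adj x y) : CaredEdge A x y :=
  ⟨h.resolve_left hU, hU⟩

theorem CaredEdge.symm {x y : V} (h : CaredEdge A x y) : CaredEdge A y x :=
  ⟨h.1.symm, fun h' => h.2 h'.symm⟩

theorem IsHole.mem_edges_of_adj_underlyingGraph (hH : IsHole (phylogenyGraph A) c) {a b : V}
    (ha : a ∈ c.support) (hb : b ∈ c.support) (hab : (underlyingGraph A).Adj a b) :
    s(a, b) ∈ c.edges :=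
  hH.2.2 a ha b hb (underlyingGraph_le_phylogenyGraph hab)

theorem IsHole.not_adj_underlyingGraph_of_adj_of_adj (hH : IsHole (phylogenyGraph A) c)
    {p q r : V} (hp : p ∈ c.support) (hq : q ∈ c.support) (hr : r ∈ c.support)
    (hpq : (underlyingGraph A).Adj p q) (hqr : (underlyingGraph A).Adj q r) :
    ¬ (underlyingGraph A).Adj p r := fun hpr =>
  hH.not_adj_of_adj_of_adj hp hq hr (underlyingGraph_le_phylogenyGraph hpq)
    (underlyingGraph_le_phylogenyGraph hqr) (underlyingGraph_le_phylogenyGraph hpr)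

variable (A c) in
def caretakers : Set V :=
  {w | ∃ x y, s(x, y) ∈ c.edges ∧ CaredEdge A x y ∧ A x w ∧ A y w}

variable (A c) in
def extendedSupport : Set V :=
  {v | v ∈ c.support} ∪ caretakers A c

theorem IsHole.caretaker_notMem_support (hD : IsIJDigraph 2 2 A)
    (hH : IsHole (phylogenyGraph A) c) {w : V} (hw : w ∈ caretakers A c) : w ∉ c.support := by
  intro hwc
  obtain ⟨x, y, he, hxy, hxw, hyw⟩ := hw
  have hP : ∀ {a b}, A a b → (phylogenyGraph A).Adj a b := fun h =>
    underlyingGraph_le_phylogenyGraph (hD.adj_underlyingGraph h)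
  exact hH.not_adj_of_adj_of_adj (c.fst_mem_support_of_mem_edges he) hwc
    (c.snd_mem_support_of_mem_edges he) (hP hxw) (hP hyw).symm (Or.inr hxy.1)

variable [Finite V]

theorem exists_of_mem_caretakers (hD : IsIJDigraph 2 2 A) {w : V} (hw : w ∈ caretakers A c) :
    ∃ x y, s(x, y) ∈ c.edges ∧ CaredEdge A x y ∧ A x w ∧ A y w ∧
      ∀ t, A t w → t = x ∨ t = y := by
  obtain ⟨x, y, he, hxy, hxw, hyw⟩ := hw
  exact ⟨x, y, he, hxy, hxw, hyw, fun t ht => hD.eq_or_eq_of_arc_to hxw hyw hxy.1.1 ht⟩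

theorem IsHole.not_adj_of_mem_caretakers (hD : IsIJDigraph 2 2 A)
    (hH : IsHole (phylogenyGraph A) c) {w w' : V} (hw : w ∈ caretakers A c)
    (hw' : w' ∈ caretakers A c) : ¬ (underlyingGraph A).Adj w w' := by
  -- an arc between two caretakers would make one of them an end of a cared edge of the hole
  have key : ∀ {w w'}, w ∈ caretakers A c → w' ∈ caretakers A c → ¬ A w w' := by
    intro w w' hw hw' hww'
    obtain ⟨x, y, he, -, -, -, hin⟩ := exists_of_mem_caretakers hD hw'
    rcases hin w hww' with rfl | rfl
    · exact hH.caretaker_notMem_support hD hw (c.fst_mem_support_of_mem_edges he)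
    · exact hH.caretaker_notMem_support hD hw (c.snd_mem_support_of_mem_edges he)
  rintro ⟨-, h | h⟩
  exacts [key hw hw' h, key hw' hw h]

theorem IsHole.mem_support_of_adj_caretaker (hD : IsIJDigraph 2 2 A)
    (hH : IsHole (phylogenyGraph A) c) {w v : V} (hw : w ∈ caretakers A c)
    (hv : v ∈ extendedSupport A c) (hwv : (underlyingGraph A).Adj w v) : v ∈ c.support :=
  hv.resolve_right fun hv' => hH.not_adj_of_mem_caretakers hD hw hv' hwv

end Hole

section Diamond

variable {V : Type*} [Finite V] {A : V → V → Prop} {u : V} {c : (phylogenyGraph A).Walk u u}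

/-- The diamond `w a b d` with chord `wb` in which `w` takes care of the cared edge `ay` of the
hole, `w → b`, `w → d`, and `a → b → d` runs along the hole; the last five fields are the in- and
out-neighbourhoods that the degree bounds force. -/
structure CaretakerDiamond (A : V → V → Prop) (c : (phylogenyGraph A).Walk u u)
    (w a b d y : V) : Prop where
  haw : A a w
  hyw : A y w
  hwb : A w b
  hwd : A w d
  hab : A a b
  hbd : A b d
  heab : s(a, b) ∈ c.edges
  hebd : s(b, d) ∈ c.edges
  hcay : CaredEdge A a y
  hb : b ∈ c.support
  hin_w : ∀ t, A t w → t = a ∨ t = y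
  hin_b : ∀ t, A t b → t = w ∨ t = a
  hin_d : ∀ t, A t d → t = w ∨ t = b
  hout_w : ∀ t, A w t → t = b ∨ t = d
  hout_a : ∀ t, A a t → t = w ∨ t = b

theorem IsHole.exists_caretakerDiamond (hD : IsIJDigraph 2 2 A)
    (hH : IsHole (phylogenyGraph A) c) {w a b d : V} (hw : w ∈ caretakers A c)
    (ha : a ∈ c.support) (hb : b ∈ c.support) (hd : d ∈ c.support) (had : a ≠ d)
    (haw : A a w) (hwb : A w b) (hwd : A w d)
    (hab : (underlyingGraph A).Adj a b) (hbd : (underlyingGraph A).Adj b d) :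
    ∃ y, CaretakerDiamond A c w a b d y := by
  obtain ⟨x₀, y₀, -, hxy₀, hx₀w, hy₀w, hin_w⟩ := exists_of_mem_caretakers hD hw
  have hwa : w ≠ a := (hD.ne_of_arc haw).symm
  have hwb' : w ≠ b := hD.ne_of_arc hwb
  have hab' : A a b := hab.2.resolve_right fun hba => hD.not_arc_of_arc_of_arc haw hwb hba
  have hbd' : A b d := hbd.2.resolve_right fun hdb => by
    rcases hD.eq_or_eq_of_arc_to hwb hab' hwa hdb with rfl | rfl
    exacts [hD.irrefl _ hwd, had rfl]
  have hex : ∃ y, A y w ∧ CaredEdge A a y ∧ ∀ t, A t w → t = a ∨ t = y := by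
    rcases hin_w a haw with rfl | rfl
    · exact ⟨y₀, hy₀w, hxy₀, hin_w⟩
    · exact ⟨x₀, hx₀w, hxy₀.symm, fun t ht => (hin_w t ht).symm⟩
  obtain ⟨y, hyw, hay, hin_w'⟩ := hex
  exact ⟨y, haw, hyw, hwb, hwd, hab', hbd', hH.mem_edges_of_adj_underlyingGraph ha hb hab,
    hH.mem_edges_of_adj_underlyingGraph hb hd hbd, hay, hb, hin_w',
    fun t ht => hD.eq_or_eq_of_arc_to hwb hab' hwa ht,
    fun t ht => hD.eq_or_eq_of_arc_to hwd hbd' hwb' ht,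
    fun t ht => hD.eq_or_eq_of_arc_from hwb hwd (hD.ne_of_arc hbd') ht,
    fun t ht => hD.eq_or_eq_of_arc_from haw hab' hwb' ht⟩

theorem IsHole.exists_caretakerDiamond_of_mem_caretakers (hD : IsIJDigraph 2 2 A)
    (hH : IsHole (phylogenyGraph A) c) {p q r s : V} (hp : p ∈ caretakers A c)
    (hq : q ∈ extendedSupport A c) (hr : r ∈ extendedSupport A c)
    (hs : s ∈ extendedSupport A c) (hdia : (underlyingGraph A).IsDiamond p q r s) :
    ∃ y, CaretakerDiamond A c p q r s y ∨ CaretakerDiamond A c p s r q y := by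
  obtain ⟨hpq, hqr, hrs, hsp, hpr, hqs⟩ := hdia
  have hq := hH.mem_support_of_adj_caretaker hD hp hq hpq
  have hr := hH.mem_support_of_adj_caretaker hD hp hr hpr
  have hs := hH.mem_support_of_adj_caretaker hD hp hs hsp.symm
  obtain ⟨x₀, y₀, -, hxy₀, -, -, hin⟩ := exists_of_mem_caretakers hD hp
  have hin_nonadj : ∀ {t t'}, A t p → A t' p → ¬ (underlyingGraph A).Adj t t' := by
    intro t t' ht ht' htt'
    rcases hin t ht with rfl | rfl <;> rcases hin t' ht' with rfl | rfl
    exacts [htt'.ne rfl, hxy₀.2 htt', hxy₀.2 htt'.symm, htt'.ne rfl]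
  have hpr' : A p r := by
    refine hpr.2.resolve_right fun hrp => ?_
    rcases hpq.2 with hpq' | hqp <;> rcases hsp.2 with hsp' | hps
    · exact hin_nonadj hrp hsp' hrs
    · rcases hqr.2 with hqr' | hrq
      · exact hD.not_arc_of_arc_of_arc hpq' hqr' hrp
      rcases hrs.2 with hrs' | hsr
      · rcases hD.eq_or_eq_of_arc_from hrq hrs' hqs hrp with rfl | rfl
        exacts [hpq.ne rfl, hsp.ne rfl]
      · exact hD.not_arc_of_arc_of_arc hps hsr hrp
    · rcases hD.eq_or_eq_of_arc_to hqp hsp' hqs hrp with rfl | rfl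
      exacts [hqr.ne rfl, hrs.ne rfl]
    · exact hin_nonadj hqp hrp hqr
  rcases hpq.2 with hpq' | hqp <;> rcases hsp.2 with hsp' | hps
  · obtain ⟨y, hy⟩ := hH.exists_caretakerDiamond hD hp hs hr hq (Ne.symm hqs) hsp' hpr' hpq'
      hrs.symm hqr.symm
    exact ⟨y, Or.inr hy⟩
  · rcases hD.eq_or_eq_of_arc_from hpq' hps hqs hpr' with rfl | rfl
    exacts [(hqr.ne rfl).elim, (hrs.ne rfl).elim]
  · exact (hH.not_adj_of_adj_of_adj hq hr hs (underlyingGraph_le_phylogenyGraph hqr)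
      (underlyingGraph_le_phylogenyGraph hrs) (Or.inr ⟨hqs, p, hqp, hsp'⟩)).elim
  · obtain ⟨y, hy⟩ := hH.exists_caretakerDiamond hD hp hq hr hs hqs hqp hpr' hps hqr hrs
    exact ⟨y, Or.inl hy⟩

theorem not_arc_of_isDiamond (hD : IsIJDigraph 2 2 A) {p q r s : V}
    (hq : q ∈ caretakers A c) (hs : s ∈ caretakers A c)
    (hdia : (underlyingGraph A).IsDiamond p q r s) : ¬ A p r := fun hpr => by
  obtain ⟨hpq, hqr, hrs, hsp, hpr', hqs⟩ := hdia
  -- both `q` and `s` send their arc to `r`, which then has the three in-neighbours `p`, `q`, `s`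
  have to_r : ∀ {t}, t ∈ caretakers A c → (underlyingGraph A).Adj p t →
      (underlyingGraph A).Adj t r → A t r := by
    intro t ht hpt htr
    obtain ⟨x₁, y₁, -, hxy₁, -, -, hin⟩ := exists_of_mem_caretakers hD ht
    refine htr.2.resolve_right fun hrt => ?_
    rcases hpt.2 with hpt' | htp
    · rcases hin p hpt' with rfl | rfl <;> rcases hin r hrt with rfl | rfl
      exacts [hpr'.ne rfl, hxy₁.2 hpr', hxy₁.2 hpr'.symm, hpr'.ne rfl]
    · exact hD.not_arc_of_arc_of_arc hpr hrt htp
  rcases hD.eq_or_eq_of_arc_to (to_r hq hpq hqr) (to_r hs hsp.symm hrs.symm) hqs hpr with h | h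
  exacts [hpq.ne h, hsp.ne h.symm]

theorem IsHole.exists_caretakerDiamond_of_isDiamond (hD : IsIJDigraph 2 2 A)
    (hH : IsHole (phylogenyGraph A) c) {p q r s : V} (hp : p ∈ extendedSupport A c)
    (hq : q ∈ extendedSupport A c) (hr : r ∈ extendedSupport A c)
    (hs : s ∈ extendedSupport A c) (hdia : (underlyingGraph A).IsDiamond p q r s) :
    ∃ w a b d y, CaretakerDiamond A c w a b d y ∧
      ((w = p ∧ a = q ∧ b = r ∧ d = s) ∨ (w = p ∧ a = s ∧ b = r ∧ d = q) ∨
       (w = r ∧ a = s ∧ b = p ∧ d = q) ∨ (w = r ∧ a = q ∧ b = p ∧ d = s)) := by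
  by_cases hpW : p ∈ caretakers A c
  · obtain ⟨y, hy | hy⟩ := hH.exists_caretakerDiamond_of_mem_caretakers hD hpW hq hr hs hdia
    · exact ⟨p, q, r, s, y, hy, Or.inl ⟨rfl, rfl, rfl, rfl⟩⟩
    · exact ⟨p, s, r, q, y, hy, Or.inr (Or.inl ⟨rfl, rfl, rfl, rfl⟩)⟩
  obtain ⟨hpq, hqr, hrs, hsp, hpr, hqs⟩ := hdia
  by_cases hrW : r ∈ caretakers A c
  · obtain ⟨y, hy | hy⟩ := hH.exists_caretakerDiamond_of_mem_caretakers hD hrW hs hp hq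
      ⟨hrs, hsp, hpq, hqr, hpr.symm, hqs.symm⟩
    · exact ⟨r, s, p, q, y, hy, Or.inr (Or.inr (Or.inl ⟨rfl, rfl, rfl, rfl⟩))⟩
    · exact ⟨r, q, p, s, y, hy, Or.inr (Or.inr (Or.inr ⟨rfl, rfl, rfl, rfl⟩))⟩
  -- both ends of the chord lie on the hole, so the other two corners are caretakers
  have hp := hp.resolve_right hpW
  have hr := hr.resolve_right hrW
  have hq : q ∈ caretakers A c := hq.resolve_left fun hq =>
    hH.not_adj_underlyingGraph_of_adj_of_adj hp hq hr hpq hqr hpr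
  have hs : s ∈ caretakers A c := hs.resolve_left fun hs =>
    hH.not_adj_underlyingGraph_of_adj_of_adj hp hs hr hsp.symm hrs.symm hpr
  exfalso
  rcases hpr.2 with h | h
  · exact not_arc_of_isDiamond hD hq hs ⟨hpq, hqr, hrs, hsp, hpr, hqs⟩ h
  · exact not_arc_of_isDiamond hD hs hq ⟨hrs, hsp, hpq, hqr, hpr.symm, hqs.symm⟩ h

end Diamond

namespace CaretakerDiamond

variable {V : Type*} {A : V → V → Prop} {u : V} {c : (phylogenyGraph A).Walk u u}
  {w a b d y m : V}

theorem false_of_adj_a_b (hD : IsIJDigraph 2 2 A) (hB : CaretakerDiamond A c w a b d y)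
    (hmw : m ≠ w) (hma : m ≠ a) (hmb : m ≠ b) (h₁ : (underlyingGraph A).Adj m a)
    (h₂ : (underlyingGraph A).Adj m b) : False := by
  have hma' : A m a := h₁.2.resolve_right fun ham => by
    rcases hB.hout_a m ham with rfl | rfl
    exacts [hmw rfl, hmb rfl]
  have hbm : A b m := h₂.2.resolve_left fun hmb' => by
    rcases hB.hin_b m hmb' with rfl | rfl
    exacts [hmw rfl, hma rfl]
  exact hD.not_arc_of_arc_of_arc hma' hB.hab hbm

theorem false_of_adj_b_d [Finite V] (hD : IsIJDigraph 2 2 A) (hH : IsHole (phylogenyGraph A) c)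
    (hB : CaretakerDiamond A c w a b d y) (hmw : m ≠ w) (hma : m ≠ a) (hmb : m ≠ b)
    (hmd : m ≠ d) (hm : m ∈ extendedSupport A c) (h₁ : (underlyingGraph A).Adj m b)
    (h₂ : (underlyingGraph A).Adj m d) : False := by
  have hbm : A b m := h₁.2.resolve_left fun hmb' => by
    rcases hB.hin_b m hmb' with rfl | rfl
    exacts [hmw rfl, hma rfl]
  have hdm : A d m := h₂.2.resolve_left fun hmd' => by
    rcases hB.hin_d m hmd' with rfl | rfl
    exacts [hmw rfl, hmb rfl]
  rcases hm with hm | hm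
  · -- `b` would have the three neighbours `a`, `d`, `m` along the hole
    have had : a ≠ d := fun had => hD.asymm hB.hab (had ▸ hB.hbd)
    rcases hH.1.eq_or_eq_of_mem_edges_s14 (Sym2.eq_swap ▸ hB.heab) hB.hebd had
      (hH.mem_edges_of_adj_underlyingGraph hB.hb hm (hD.adj_underlyingGraph hbm)) with h | h
    exacts [hma h, hmd h]
  · -- `m` would take care of `bd`, which is not a cared edge
    obtain ⟨x₁, y₁, -, hxy₁, -, -, hin⟩ := exists_of_mem_caretakers hD hm
    have hbd := hD.adj_underlyingGraph hB.hbd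
    rcases hin b hbm with rfl | rfl <;> rcases hin d hdm with rfl | rfl
    exacts [hbd.ne rfl, hxy₁.2 hbd, hxy₁.2 hbd.symm, hbd.ne rfl]

theorem eq_of_adj_w (hB : CaretakerDiamond A c w a b d y) (hma : m ≠ a) (hmb : m ≠ b)
    (hmd : m ≠ d) (h : (underlyingGraph A).Adj m w) : m = y := by
  rcases h.2 with hmw | hwm
  · exact (hB.hin_w m hmw).resolve_left hma
  · rcases hB.hout_w m hwm with rfl | rfl
    exacts [(hmb rfl).elim, (hmd rfl).elim]

theorem false_of_adj_w_a (hB : CaretakerDiamond A c w a b d y) (hma : m ≠ a) (hmb : m ≠ b)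
    (hmd : m ≠ d) (h₁ : (underlyingGraph A).Adj m w) (h₂ : (underlyingGraph A).Adj m a) :
    False := by
  obtain rfl := hB.eq_of_adj_w hma hmb hmd h₁
  exact hB.hcay.2 h₂.symm

theorem false_of_adj_d_w (hD : IsIJDigraph 2 2 A) (hB : CaretakerDiamond A c w a b d y)
    (hma : m ≠ a) (hmb : m ≠ b) (hmd : m ≠ d) (h₁ : (underlyingGraph A).Adj m d)
    (h₂ : (underlyingGraph A).Adj m w) : False := by
  obtain rfl := hB.eq_of_adj_w hma hmb hmd h₂
  have hdm : A d m := h₁.2.resolve_left fun hmd' => by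
    rcases hB.hin_d m hmd' with rfl | rfl
    exacts [hD.irrefl _ hB.hyw, hD.asymm hB.hyw hB.hwb]
  exact hD.not_arc_of_arc_of_arc hB.hwd hdm hB.hyw

end CaretakerDiamond

theorem IsHole.rimTriangleFree {V : Type*} [Finite V] {A : V → V → Prop} {u : V}
    {c : (phylogenyGraph A).Walk u u} (hD : IsIJDigraph 2 2 A)
    (hH : IsHole (phylogenyGraph A) c) :
    (underlyingGraph A).RimTriangleFree (extendedSupport A c) := by
  intro p q r s m hp hq hr hs hm hdia hmp hmq hmr hms
  have hmp' := hmp.ne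
  have hmq' := hmq.ne
  obtain ⟨w, a, b, d, y, hB, h⟩ := hH.exists_caretakerDiamond_of_isDiamond hD hp hq hr hs hdia
  rcases h with ⟨rfl, rfl, rfl, rfl⟩ | ⟨rfl, rfl, rfl, rfl⟩ | ⟨rfl, rfl, rfl, rfl⟩ |
    ⟨rfl, rfl, rfl, rfl⟩
  · exact hB.false_of_adj_w_a hmq' hmr hms hmp hmq
  · exact hB.false_of_adj_d_w hD hms hmr hmq' hmq hmp
  · exact hB.false_of_adj_b_d hD hH hmr hms hmp' hmq' hm hmp hmq
  · exact hB.false_of_adj_a_b hD hmr hmq' hmp' hmq hmp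

section LongCycle

variable {V : Type*} [Finite V] {A : V → V → Prop} {u : V} {c : (phylogenyGraph A).Walk u u}

/-- Replacing every cared edge `xy` of a path along the hole by a detour `x → w ← y` through one
of its caretakers gives a path of the underlying graph. -/
theorem IsHole.exists_isPath_underlyingGraph (hD : IsIJDigraph 2 2 A)
    (hH : IsHole (phylogenyGraph A) c) {a b : V} (p : (phylogenyGraph A).Walk a b)
    (hp : p.IsPath) (hE : ∀ e ∈ p.edges, e ∈ c.edges) (hV : ∀ v ∈ p.support, v ∈ c.support) :
    ∃ q : (underlyingGraph A).Walk a b, q.IsPath ∧ p.length ≤ q.length ∧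
      ∀ v ∈ q.support, v ∈ p.support ∨
        ∃ x y, s(x, y) ∈ p.edges ∧ CaredEdge A x y ∧ A x v ∧ A y v := by
  induction p with
  | nil => exact ⟨.nil, by simp, le_rfl, by simp⟩
  | @cons a a' b h p ih =>
    obtain ⟨hp', ha⟩ := (Walk.cons_isPath_iff h p).1 hp
    obtain ⟨q, hq, hlen, hqV⟩ := ih hp' (fun e he => hE e (by simp [he]))
      (fun v hv => hV v (by simp [hv]))
    have hac : a ∈ c.support := hV a (by simp)
    have haq : a ∉ q.support := fun haq => (hqV a haq).elim ha fun ⟨x, y, he, hxy, hxa, hya⟩ =>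
      hH.caretaker_notMem_support hD ⟨x, y, hE _ (by simp [he]), hxy, hxa, hya⟩ hac
    have hqV' : ∀ v ∈ q.support, v ∈ (Walk.cons h p).support ∨
        ∃ x y, s(x, y) ∈ (Walk.cons h p).edges ∧ CaredEdge A x y ∧ A x v ∧ A y v :=
      fun v hv => (hqV v hv).imp (fun hv => by simp [hv])
        fun ⟨x, y, he, hxy⟩ => ⟨x, y, by simp [he], hxy⟩
    by_cases hU : (underlyingGraph A).Adj a a'
    · refine ⟨.cons hU q, hq.cons haq, by simpa using hlen, ?_⟩
      simpa using hqV'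
    have hcared := caredEdge_of_adj_phylogenyGraph h hU
    obtain ⟨haa', w, haw, ha'w⟩ := hcared.1
    have hwc : w ∉ c.support :=
      hH.caretaker_notMem_support hD ⟨a, a', hE _ (by simp), hcared, haw, ha'w⟩
    have hwq : w ∉ q.support := fun hwq => (hqV w hwq).elim (fun hw => hwc (hV w (by simp [hw])))
      fun ⟨x, y, he, hxy, hxw, hyw⟩ => ha <| p.fst_mem_support_of_mem_edges <|
        hD.sym2_eq_of_arc_to haw ha'w haa' hxw hyw hxy.1.1 ▸ he
    refine ⟨.cons (hD.adj_underlyingGraph haw) (.cons (hD.adj_underlyingGraph ha'w).symm q),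
      (hq.cons hwq).cons ?_, by simp; omega, ?_⟩
    · simp only [Walk.support_cons, List.mem_cons, not_or]
      exact ⟨fun haw' => hwc (haw' ▸ hac), haq⟩
    · intro v hv
      simp only [Walk.support_cons, List.mem_cons] at hv
      rcases hv with rfl | rfl | hv
      · exact Or.inl (by simp)
      · exact Or.inr ⟨a, a', by simp, hcared, haw, ha'w⟩
      · exact hqV' v hv

theorem IsHole.exists_isCycle_underlyingGraph (hD : IsIJDigraph 2 2 A)
    (hH : IsHole (phylogenyGraph A) c) {x y : V} (he : s(x, y) ∈ c.edges)
    (hxy : CaredEdge A x y) :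
    ∃ (z : V) (C : (underlyingGraph A).Walk z z), C.IsCycle ∧ 5 ≤ C.length ∧
      ∀ v ∈ C.support, v ∈ extendedSupport A c := by
  obtain ⟨p, q, hp, hq, hlen, -, hE, hV⟩ :=
    hH.1.exists_isPath_isPath (c.fst_mem_support_of_mem_edges he)
      (c.snd_mem_support_of_mem_edges he) hxy.1.1
  -- one of the two paths is the edge `xy`, the other one runs around the rest of the hole
  wlog hq1 : s(x, y) ∈ q.edges generalizing p q
  · exact this q p hq hp (by omega) (fun e => (hE e).trans or_comm)
      (fun v => (hV v).trans or_comm) (((hE _).1 he).resolve_right hq1)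
  have hq1 := hq.length_eq_one_of_mem_edges hq1
  have h4 := hH.2.1
  have hpxy : s(x, y) ∉ p.edges := fun h => by
    have := hp.length_eq_one_of_mem_edges h
    omega
  obtain ⟨r, hr, hrlen, hrV⟩ := hH.exists_isPath_underlyingGraph hD p hp
    (fun e he => (hE e).2 (Or.inl he)) (fun v hv => (hV v).2 (Or.inl hv))
  obtain ⟨hxy', w, hxw, hyw⟩ := hxy.1
  have hw : w ∈ caretakers A c := ⟨x, y, he, hxy, hxw, hyw⟩
  have hwc := hH.caretaker_notMem_support hD hw
  have hwr : w ∉ r.support := fun hwr => (hrV w hwr).elim (fun h => hwc ((hV w).2 (Or.inl h)))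
    fun ⟨x', y', he', hxy'', hx'w, hy'w⟩ =>
      hpxy (hD.sym2_eq_of_arc_to hxw hyw hxy' hx'w hy'w hxy''.1.1 ▸ he')
  refine ⟨y, .cons (hD.adj_underlyingGraph hyw) (.cons (hD.adj_underlyingGraph hxw).symm r),
    (hr.cons hwr).isCycle_cons _ (by simp; omega), by simp; omega, ?_⟩
  simp only [Walk.support_cons, List.mem_cons, forall_eq_or_imp]
  refine ⟨Or.inl (c.snd_mem_support_of_mem_edges he), Or.inr hw, fun v hv => ?_⟩
  rcases hrV v hv with h | ⟨x', y', he', hrest⟩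
  · exact Or.inl ((hV v).2 (Or.inl h))
  · exact Or.inr ⟨x', y', (hE _).2 (Or.inl he'), hrest⟩

end LongCycle

/-- Let `D` be a `(2,2)` digraph and `H` a hole of the phylogeny graph of `D`.
Then there exists a hole in the underlying graph of `D` such that: if `H` is itself a
hole of the underlying graph (i.e. all edges of `H` lie in the underlying graph), this
hole equals `H` (same edges, hence the same cycle); otherwise, this hole contains only
vertices of `V(H) ∪ W` for some set `W` extending `H`. -/
theorem stmt_14 {V : Type*} [Fintype V] (A : V → V → Prop)
    (hD : IsIJDigraph 2 2 A)
    (u : V) (c : (phylogenyGraph A).Walk u u) (hH : IsHole (phylogenyGraph A) c) :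
    ∃ (u' : V) (c' : (underlyingGraph A).Walk u' u'),
      IsHole (underlyingGraph A) c' ∧
      ((∀ e ∈ c.edges, e ∈ (underlyingGraph A).edgeSet) →
        ∀ e : Sym2 V, e ∈ c'.edges ↔ e ∈ c.edges) ∧
      (¬ (∀ e ∈ c.edges, e ∈ (underlyingGraph A).edgeSet) →
        ∃ W : Set V, ExtendingSet A c W ∧
          ∀ x ∈ c'.support, x ∈ c.support ∨ x ∈ W) := by
  by_cases hU : ∀ e ∈ c.edges, e ∈ (underlyingGraph A).edgeSet
  · exact ⟨u, c.transfer _ hU, hH.transfer underlyingGraph_le_phylogenyGraph hU,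
      fun _ e => by rw [Walk.edges_transfer], fun h => (h hU).elim⟩
  obtain ⟨x, y, he, hxy⟩ : ∃ x y, s(x, y) ∈ c.edges ∧ CaredEdge A x y := by
    push Not at hU
    obtain ⟨⟨x, y⟩, he, hxy⟩ := hU
    exact ⟨x, y, he, caredEdge_of_adj_phylogenyGraph (c.adj_of_mem_edges he) hxy⟩
  obtain ⟨z, C, hC, h5, hCS⟩ := hH.exists_isCycle_underlyingGraph hD he hxy
  obtain ⟨u', c', hc', hc'S⟩ := (hH.rimTriangleFree hD).hasHoleOn C hC h5 hCS
  refine ⟨u', c', hc', fun h => (hU h).elim, fun _ => ⟨caretakers A c, ⟨fun w hw => hw, ?_⟩, hc'S⟩⟩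
  intro x y he hxy
  obtain ⟨-, w, hxw, hyw⟩ := hxy.1
  exact ⟨w, ⟨x, y, he, hxy, hxw, hyw⟩, hxw, hyw⟩
end
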